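/- arXiv:1308.0266 — 2 statements merged into one kernel-verified Lean document; each statement's English description precedes it below -/
import Mathlib

section
/- The definite integral ∫₀¹ 3·(2p⁵ + 9p⁴ + 18p³ + 22p² + 8p + 1) / (2·(p⁴ + 4p³ + 8p² + 14p + 3)·(1 + p)) dp is strictly greater than 0.4375746. -/
/-- The definite integral
`∫₀¹ 3(2p⁵+9p⁴+18p³+22p²+8p+1) / (2(p⁴+4p³+8p²+14p+3)(1+p)) dp`
is strictly greater than `0.4375746`. -/
theorem integral_gt :
    (0.4375746 : ℝ) <
      ∫ p in (0:ℝ)..1,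
        3 * (2 * p ^ 5 + 9 * p ^ 4 + 18 * p ^ 3 + 22 * p ^ 2 + 8 * p + 1) /
          (2 * (p ^ 4 + 4 * p ^ 3 + 8 * p ^ 2 + 14 * p + 3) * (1 + p)) := by
  set f : ℝ → ℝ := fun p =>
    3 * (2 * p ^ 5 + 9 * p ^ 4 + 18 * p ^ 3 + 22 * p ^ 2 + 8 * p + 1) /
      (2 * (p ^ 4 + 4 * p ^ 3 + 8 * p ^ 2 + 14 * p + 3) * (1 + p)) with hf
  have hden : ∀ p ∈ Set.Icc (0:ℝ) 1,
      2 * (p ^ 4 + 4 * p ^ 3 + 8 * p ^ 2 + 14 * p + 3) * (1 + p) ≠ 0 := by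
    intro p hp
    obtain ⟨h0, h1⟩ := hp
    nlinarith [pow_nonneg h0 4, pow_nonneg h0 3, pow_nonneg h0 2]
  have hcont : ContinuousOn f (Set.Icc 0 1) := by
    apply ContinuousOn.div
    · fun_prop
    · fun_prop
    · exact hden
  have hint : IntervalIntegrable f MeasureTheory.volume 0 1 := by
    apply ContinuousOn.intervalIntegrable
    rwa [Set.uIcc_of_le (by norm_num : (0:ℝ) ≤ 1)]
  have hge : ∀ p ∈ Set.Icc (0:ℝ) 1, (1/2 : ℝ) ≤ f p := by
    intro p hp
    obtain ⟨h0, h1⟩ := hp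
    rw [hf]
    have hd : 0 < 2 * (p ^ 4 + 4 * p ^ 3 + 8 * p ^ 2 + 14 * p + 3) * (1 + p) := by
      nlinarith [pow_nonneg h0 4, pow_nonneg h0 3, pow_nonneg h0 2]
    rw [le_div_iff₀ hd]
    nlinarith [pow_nonneg h0 4, pow_nonneg h0 3, pow_nonneg h0 2, mul_nonneg h0 h0]
  have hmono : (∫ p in (0:ℝ)..1, (1/2 : ℝ)) ≤ ∫ p in (0:ℝ)..1, f p := by
    apply intervalIntegral.integral_mono_on (by norm_num)
      (intervalIntegrable_const) hint hge
  have hc : (∫ p in (0:ℝ)..1, (1/2 : ℝ)) = 1/2 := by simp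
  rw [hc] at hmono
  linarith
end

section
/- Let r ≥ 1 and g ∈ ℕ. For every finite simple graph G whose maximum degree is at most r and whose girth is at least g, there exists a finite simple r-regular graph G' with girth at least g that contains G as an induced subgraph; that is, there is an injective map from the vertices of G to the vertices of G' under which two vertices of G are adjacent in G if and only if their images are adjacent in G'. -/
/-!
Take copies `V × {σ}` of `G`, one for each element `σ` of a finite group `Γ`, and at every vertex
`v` attach `r - deg v` semi-edges, each carrying its own involution `t ∈ Γ`; a semi-edge lifts to
the perfect matching `(v, σ) ~ (v, t * σ)`. Every vertex of the lift has degree `r`, and each copy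
of `G` is induced. A cycle of the lift either stays in one copy, and is then as long as a cycle
of `G`, or reads off a nonempty reduced word in the involutions, no longer than the cycle, whose
product is `1`. So it suffices that no nonempty reduced word of length `< g` is trivial in `Γ`:
take for `Γ` the permutations of the ball of radius `g + 1` in the free product of copies of
`ℤ/2`, the generators acting by left multiplication, truncated at the boundary sphere.
-/

open Function

structure IsInvolutionFamily {A Γ : Type*} [Group Γ] (s : A → Γ) : Prop where
  injective : Injective s
  mul_self : ∀ a, s a * s a = 1
  ne_one : ∀ a, s a ≠ 1

/-- The ball of radius `n` about `1` in the free product of copies of `ℤ/2` indexed by `A`,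
as reduced words. -/
def ReducedBall (A : Type*) (n : ℕ) : Set (List A) :=
  {w | w.IsChain (· ≠ ·) ∧ w.length ≤ n}

namespace ReducedBall

variable {A : Type*} {n : ℕ}

instance [Finite A] : Finite (ReducedBall A n) :=
  ((List.finite_length_le A n).subset fun _ hw => hw.2).to_subtype

theorem nil_mem : [] ∈ ReducedBall A n := ⟨List.isChain_nil, Nat.zero_le n⟩

variable [DecidableEq A]

/-- Left multiplication by the generator `a`, except on the sphere of radius `n`, where it would
leave the ball. -/
def toggle (n : ℕ) (a : A) (w : List A) : List A :=
  if w.head? = some a then w.tail else if w.length < n then a :: w else w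

theorem toggle_mem {a : A} {w : List A} (hw : w ∈ ReducedBall A n) :
    toggle n a w ∈ ReducedBall A n := by
  unfold toggle
  split_ifs with h1 h2
  · exact ⟨hw.1.tail, List.length_tail ▸ (Nat.sub_le _ _).trans hw.2⟩
  · exact ⟨List.isChain_cons.2 ⟨fun b hb hab => h1 (hab ▸ hb), hw.1⟩, h2⟩
  · exact hw

theorem toggle_cons {a : A} {w : List A} (hw : (a :: w) ∈ ReducedBall A n) :
    toggle n a w = a :: w := by
  have hhead : w.head? ≠ some a := fun h => (List.isChain_cons.1 hw.1).1 a h rfl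
  have hlen : w.length < n := hw.2
  simp [toggle, hhead, hlen]

theorem toggle_toggle {a : A} {w : List A} (hw : w ∈ ReducedBall A n) :
    toggle n a (toggle n a w) = w := by
  rcases w with _ | ⟨b, w⟩
  · by_cases h0 : 0 < n <;> simp [toggle, h0]
  · by_cases hb : b = a
    · subst hb
      rw [show toggle n b (b :: w) = w by simp [toggle], toggle_cons hw]
    · by_cases hl : w.length + 1 < n <;> simp [toggle, hb, hl]

def togglePerm (n : ℕ) (a : A) : Equiv.Perm (ReducedBall A n) :=
  Involutive.toPerm (fun w => ⟨toggle n a w, toggle_mem w.2⟩)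
    fun w => Subtype.ext (toggle_toggle w.2)

theorem prod_map_togglePerm_apply_nil {w : List A} (hw : w ∈ ReducedBall A n) :
    (w.map (togglePerm n)).prod ⟨[], nil_mem⟩ = ⟨w, hw⟩ := by
  induction w with
  | nil => rfl
  | cons a w ih =>
    rw [List.map_cons, List.prod_cons, Equiv.Perm.mul_apply,
      ih ⟨hw.1.tail, (Nat.le_succ _).trans hw.2⟩]
    exact Subtype.ext (toggle_cons hw)

theorem prod_map_togglePerm_ne_one {w : List A} (hw : w ∈ ReducedBall A n) (hne : w ≠ []) :
    (w.map (togglePerm n)).prod ≠ 1 := by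
  intro h
  have hnil := prod_map_togglePerm_apply_nil hw
  rw [h] at hnil
  exact hne (congrArg Subtype.val hnil).symm

theorem isInvolutionFamily_togglePerm (hn : 0 < n) :
    IsInvolutionFamily (togglePerm n : A → Equiv.Perm (ReducedBall A n)) where
  injective a b h := by
    have hab := congrArg (fun σ : Equiv.Perm (ReducedBall A n) => σ ⟨[], nil_mem⟩) h
    simpa [toggle, togglePerm, hn] using hab
  mul_self a := Equiv.ext fun w => Subtype.ext (toggle_toggle w.2)
  ne_one a := by
    simpa using prod_map_togglePerm_ne_one (w := [a]) ⟨List.isChain_singleton a, hn⟩ (by simp)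

end ReducedBall

namespace SimpleGraph

variable {V W Γ A : Type*} [Group Γ]

theorem Embedding.egirth_le_length_of_mem_range {G : SimpleGraph V} {H : SimpleGraph W}
    (f : G ↪g H) {z : W} {c : H.Walk z z} (hc : c.IsCycle)
    (hsupp : ∀ y ∈ c.support, y ∈ Set.range f) :
    G.egirth ≤ c.length := by
  have hinj : Injective (Embedding.induce (G := H) (Set.range f)).toHom :=
    Subtype.val_injective
  have hc' : (c.induce _ hsupp).IsCycle := by
    rwa [← Walk.isCycle_map_iff_of_injective hinj, Walk.map_induce]
  calc G.egirth = (H.induce (Set.range f)).egirth := f.isoInduceRange.egirth_eq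
    _ ≤ (c.induce _ hsupp).length := egirth_le_length hc'
    _ = c.length := by
      rw [← Walk.length_map (Embedding.induce (G := H) _).toHom, Walk.map_induce]; norm_cast

theorem IsContained.le_girth {G : SimpleGraph V} {H : SimpleGraph W} {n : ℕ} (h : G ⊑ H)
    (hG : (n : ℕ∞) ≤ G.girth) (hH : (n : ℕ∞) ≤ H.egirth) : (n : ℕ∞) ≤ H.girth := by
  rcases Nat.eq_zero_or_pos n with rfl | hn
  · simp
  have hGtop : G.egirth ≠ ⊤ := fun htop => by simp [girth, htop] at hG; omega
  rwa [girth, ENat.natCast_toNat (ne_top_of_le_ne_top hGtop h.egirth_le)]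

variable (G : SimpleGraph V) (owner : A → V) (s : A → Γ)

/-- Copies of `G` indexed by `Γ`; each `a : A` is a semi-edge at `owner a` with voltage `s a`,
lifting to the edges `(owner a, σ) ~ (owner a, s a * σ)` between copies. -/
def semiedgeLift : SimpleGraph (V × Γ) :=
  fromRel fun x y => (G.Adj x.1 y.1 ∧ x.2 = y.2) ∨ ∃ a, owner a = x.1 ∧ y = (x.1, s a * x.2)

variable {G owner s}

theorem semiedgeLift_adj (hs : IsInvolutionFamily s) {x y : V × Γ} :
    (G.semiedgeLift owner s).Adj x y ↔
      (G.Adj x.1 y.1 ∧ x.2 = y.2) ∨ ∃ a, owner a = x.1 ∧ y = (x.1, s a * x.2) := by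
  rw [semiedgeLift, fromRel_adj]
  constructor
  · rintro ⟨-, h | ⟨h, h'⟩ | ⟨a, ha, rfl⟩⟩
    · exact h
    · exact Or.inl ⟨h.symm, h'.symm⟩
    · exact Or.inr ⟨a, ha, by simp [← mul_assoc, hs.mul_self]⟩
  · rintro (⟨h, h'⟩ | ⟨a, ha, rfl⟩)
    · exact ⟨fun he => h.ne (congrArg Prod.fst he), Or.inl (Or.inl ⟨h, h'⟩)⟩
    · refine ⟨fun he => hs.ne_one a ?_, Or.inl (Or.inr ⟨a, ha, rfl⟩)⟩
      simpa using congrArg Prod.snd he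

def copyEmbedding (hs : IsInvolutionFamily s) (σ : Γ) : G ↪g G.semiedgeLift owner s where
  toFun v := (v, σ)
  inj' _ _ h := congrArg Prod.fst h
  map_rel_iff' {v w} := by
    change (G.semiedgeLift owner s).Adj (v, σ) (w, σ) ↔ _
    simp [semiedgeLift_adj hs, hs.ne_one]

noncomputable def neighborSetEquiv (hs : IsInvolutionFamily s) (x : V × Γ) :
    G.neighborSet x.1 ⊕ {a // owner a = x.1} ≃ (G.semiedgeLift owner s).neighborSet x :=
  Equiv.ofBijective
    (Sum.elim (fun v => ⟨(v, x.2), (semiedgeLift_adj hs).2 (Or.inl ⟨v.2, rfl⟩)⟩)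
      fun a => ⟨(x.1, s a * x.2), (semiedgeLift_adj hs).2 (Or.inr ⟨a, a.2, rfl⟩)⟩ :
      G.neighborSet x.1 ⊕ {a // owner a = x.1} → (G.semiedgeLift owner s).neighborSet x) <| by
    refine ⟨Injective.sumElim ?_ ?_ ?_, ?_⟩
    · intro v w h
      exact Subtype.ext (congrArg (·.1.1) h)
    · intro a b h
      exact Subtype.ext (hs.injective (mul_right_cancel (congrArg (·.1.2) h)))
    · intro v a h
      exact hs.ne_one a (right_eq_mul.1 (congrArg (·.1.2) h))
    · rintro ⟨y, hy⟩
      rcases (semiedgeLift_adj hs).1 hy with ⟨hxy, h2⟩ | ⟨a, ha, rfl⟩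
      · exact ⟨.inl ⟨y.1, hxy⟩, by simp [h2]⟩
      · exact ⟨.inr ⟨a, ha⟩, rfl⟩

/-- The semi-edge crossed from `x` to `y`, or `none` along a copy of `G`. -/
noncomputable def jumpLetter (s : A → Γ) (x y : V × Γ) : Option A := partialInv s (y.2 * x.2⁻¹)

namespace Walk

variable {H : SimpleGraph (V × Γ)} {x y : V × Γ}

noncomputable def jumpWord (s : A → Γ) (p : H.Walk x y) : List A :=
  p.darts.filterMap fun d => jumpLetter s d.fst d.snd

theorem jumpWord_cons {m : V × Γ} (h : H.Adj x m) (p : H.Walk m y) :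
    (cons h p).jumpWord s = (jumpLetter s x m).toList ++ p.jumpWord s := by
  cases hl : jumpLetter s x m <;> simp [jumpWord, hl]

theorem length_jumpWord_le (p : H.Walk x y) : (p.jumpWord s).length ≤ p.length :=
  (List.length_filterMap_le _ _).trans_eq p.length_darts

end Walk

variable {x y : V × Γ} {a : A} {L : List A}

theorem snd_eq_of_jumpLetter_eq_none (hs : IsInvolutionFamily s)
    (h : (G.semiedgeLift owner s).Adj x y) (hl : jumpLetter s x y = none) : y.2 = x.2 := by
  rcases (semiedgeLift_adj hs).1 h with ⟨-, h2⟩ | ⟨a, -, rfl⟩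
  · exact h2.symm
  · simp [jumpLetter, partialInv_left hs.injective] at hl

theorem eq_of_jumpLetter_eq_some (hs : IsInvolutionFamily s)
    (h : (G.semiedgeLift owner s).Adj x y) (hl : jumpLetter s x y = some a) :
    owner a = x.1 ∧ y = (x.1, s a * x.2) := by
  rcases (semiedgeLift_adj hs).1 h with ⟨-, h2⟩ | ⟨b, hb, rfl⟩
  · rw [jumpLetter, h2, mul_inv_cancel, hs.injective.isPartialInv] at hl
    exact absurd hl (hs.ne_one a)
  · obtain rfl : b = a := by simpa [jumpLetter, partialInv_left hs.injective] using hl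
    exact ⟨hb, rfl⟩

theorem snd_eq_prod_jumpWord_mul (hs : IsInvolutionFamily s)
    (p : (G.semiedgeLift owner s).Walk x y) : x.2 = ((p.jumpWord s).map s).prod * y.2 := by
  induction p with
  | nil => simp [Walk.jumpWord]
  | @cons x m y h p ih =>
    rw [Walk.jumpWord_cons]
    cases hl : jumpLetter s x m with
    | none => simpa [snd_eq_of_jumpLetter_eq_none hs h hl] using ih
    | some a =>
      obtain ⟨-, rfl⟩ := eq_of_jumpLetter_eq_some hs h hl
      rw [Option.toList_some, List.singleton_append, List.map_cons, List.prod_cons, mul_assoc,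
        ← ih, ← mul_assoc, hs.mul_self, one_mul]

theorem snd_eq_of_mem_support_of_jumpWord_eq_nil (hs : IsInvolutionFamily s) {z : V × Γ}
    {p : (G.semiedgeLift owner s).Walk x y} (hp : p.jumpWord s = []) (hz : z ∈ p.support) :
    z.2 = x.2 := by
  induction p with
  | nil => rw [List.mem_singleton.1 hz]
  | @cons x m y h p ih =>
    simp only [Walk.jumpWord_cons, List.append_eq_nil_iff, Option.toList_eq_nil_iff] at hp
    rw [← snd_eq_of_jumpLetter_eq_none hs h hp.1]
    rcases List.mem_cons.1 (Walk.support_cons h p ▸ hz) with rfl | hz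
    · exact snd_eq_of_jumpLetter_eq_none hs h hp.1 |>.symm
    · exact ih hp.2 hz

theorem exists_eq_cons_or_mem_support_tail (hs : IsInvolutionFamily s)
    (p : (G.semiedgeLift owner s).Walk x y) (hp : p.jumpWord s = a :: L) :
    (∃ (m : V × Γ) (h : (G.semiedgeLift owner s).Adj x m) (q : (G.semiedgeLift owner s).Walk m y),
        p = .cons h q ∧ jumpLetter s x m = some a) ∨
      (owner a, x.2) ∈ p.support.tail := by
  induction p with
  | nil => simp [Walk.jumpWord] at hp
  | @cons x m y h q ih =>
    rw [Walk.jumpWord_cons] at hp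
    cases hl : jumpLetter s x m with
    | some b =>
      obtain ⟨rfl, -⟩ := List.cons_eq_cons.1 (by simpa [hl] using hp)
      exact .inl ⟨m, h, q, rfl, hl⟩
    | none =>
      rw [hl, Option.toList_none, List.nil_append] at hp
      right
      rw [Walk.support_cons, List.tail_cons, ← snd_eq_of_jumpLetter_eq_none hs h hl]
      rcases ih hp with ⟨m', h', q', rfl, hl'⟩ | hmem
      · rw [(eq_of_jumpLetter_eq_some hs h' hl').1]
        exact Walk.start_mem_support _
      · exact List.mem_of_mem_tail hmem

theorem mem_edges_of_jumpWord_eq_cons (hs : IsInvolutionFamily s) {m : V × Γ}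
    (h : (G.semiedgeLift owner s).Adj x m) (hl : jumpLetter s x m = some a)
    {q : (G.semiedgeLift owner s).Walk m y} (hq : q.IsPath) (hw : q.jumpWord s = a :: L) :
    s(x, m) ∈ q.edges := by
  obtain ⟨hxa, rfl⟩ := eq_of_jumpLetter_eq_some hs h hl
  rcases exists_eq_cons_or_mem_support_tail hs q hw with ⟨m', h', q', rfl, hl'⟩ | hmem
  · obtain ⟨-, rfl⟩ := eq_of_jumpLetter_eq_some hs h' hl'
    have hback : ((x.1, s a * x.2).1, s a * (x.1, s a * x.2).2) = x := by
      simp [← mul_assoc, hs.mul_self]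
    rw [Walk.edges_cons]
    refine List.mem_cons.2 (.inl ?_)
    rw [hback, Sym2.eq_swap]
  · rw [hxa] at hmem
    have hnodup := hq.support_nodup
    rw [← q.cons_tail_support] at hnodup
    exact absurd hmem (List.nodup_cons.1 hnodup).1

theorem isChain_jumpWord_cons (hs : IsInvolutionFamily s) {m : V × Γ}
    (h : (G.semiedgeLift owner s).Adj x m) {q : (G.semiedgeLift owner s).Walk m y}
    (hq : q.IsPath) (he : s(x, m) ∉ q.edges) (hw : (q.jumpWord s).IsChain (· ≠ ·)) :
    ((Walk.cons h q).jumpWord s).IsChain (· ≠ ·) := by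
  rw [Walk.jumpWord_cons]
  cases hl : jumpLetter s x m with
  | none => simpa using hw
  | some a =>
    refine List.isChain_cons.2 ⟨?_, hw⟩
    rintro b hb rfl
    exact he (mem_edges_of_jumpWord_eq_cons hs h hl hq (List.eq_cons_of_mem_head? hb))

theorem Walk.IsPath.isChain_jumpWord (hs : IsInvolutionFamily s)
    {p : (G.semiedgeLift owner s).Walk x y} (hp : p.IsPath) :
    (p.jumpWord s).IsChain (· ≠ ·) := by
  induction p with
  | nil => exact List.isChain_nil
  | cons h q ih =>
    rw [Walk.cons_isPath_iff] at hp
    exact isChain_jumpWord_cons hs h hp.1 (fun he => hp.2 (q.fst_mem_support_of_mem_edges he))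
      (ih hp.1)

theorem Walk.IsCycle.isChain_jumpWord (hs : IsInvolutionFamily s)
    {p : (G.semiedgeLift owner s).Walk x x} (hp : p.IsCycle) :
    (p.jumpWord s).IsChain (· ≠ ·) := by
  cases p with
  | nil => exact absurd rfl hp.ne_nil
  | cons h q =>
    rw [Walk.cons_isCycle_iff] at hp
    exact isChain_jumpWord_cons hs h hp.1 hp.2 (hp.1.isChain_jumpWord hs)

theorem le_egirth_semiedgeLift (hs : IsInvolutionFamily s) {n : ℕ}
    (hfree : ∀ w : List A, w.IsChain (· ≠ ·) → w ≠ [] → w.length < n → (w.map s).prod ≠ 1)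
    (hG : (n : ℕ∞) ≤ G.egirth) : (n : ℕ∞) ≤ (G.semiedgeLift owner s).egirth := by
  refine le_egirth.2 fun z c hc => ?_
  by_contra! hlt
  by_cases hw : c.jumpWord s = []
  · have hsupp (y) (hy : y ∈ c.support) :
        y ∈ Set.range (copyEmbedding (G := G) (owner := owner) hs z.2) :=
      ⟨y.1, Prod.ext rfl (snd_eq_of_mem_support_of_jumpWord_eq_nil hs hw hy).symm⟩
    exact hlt.not_ge (hG.trans ((copyEmbedding hs z.2).egirth_le_length_of_mem_range hc hsupp))
  · refine hfree _ (hc.isChain_jumpWord hs) hw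
      (c.length_jumpWord_le.trans_lt (by exact_mod_cast hlt)) ?_
    exact right_eq_mul.1 (snd_eq_prod_jumpWord_mul hs c)

end SimpleGraph

theorem embed_into_regular_graph_preserving_girth_general (r : ℕ) (g : ℕ)
    (V : Type) [Fintype V] (G : SimpleGraph V) [DecidableRel G.Adj]
    (hdeg : ∀ v : V, G.degree v ≤ r) (hgirth : (g : ℕ∞) ≤ G.girth) :
    ∃ (V' : Type) (_ : Fintype V') (G' : SimpleGraph V'),
      (∀ v' : V', Nat.card (G'.neighborSet v') = r) ∧
      (g : ℕ∞) ≤ G'.girth ∧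
      ∃ f : V → V', Function.Injective f ∧
        ∀ a b : V, G.Adj a b ↔ G'.Adj (f a) (f b) := by
  classical
  let A := Σ v, Fin (r - G.degree v)
  have hs : IsInvolutionFamily (ReducedBall.togglePerm (g + 1) : A → _) :=
    ReducedBall.isInvolutionFamily_togglePerm g.succ_pos
  let f := SimpleGraph.copyEmbedding (G := G) (owner := Sigma.fst) hs 1
  refine ⟨_, Fintype.ofFinite _, G.semiedgeLift Sigma.fst (ReducedBall.togglePerm (g + 1)),
    fun x => ?_, ?_, f, f.injective, fun a b => f.map_adj_iff.symm⟩
  · rw [← Nat.card_congr (SimpleGraph.neighborSetEquiv hs x), Nat.card_sum,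
      Nat.card_congr (Equiv.sigmaSubtype x.1), Nat.card_eq_fintype_card,
      SimpleGraph.card_neighborSet_eq_degree, Nat.card_fin]
    exact Nat.add_sub_cancel' (hdeg x.1)
  · refine f.isContained.le_girth hgirth (SimpleGraph.le_egirth_semiedgeLift hs ?_
      (hgirth.trans G.egirth.natCast_toNat_le_self))
    exact fun w hw hne hlen => ReducedBall.prod_map_togglePerm_ne_one ⟨hw, by omega⟩ hne

/-- Every finite graph with maximum degree at most `r ≥ 1` and girth at least `g` embeds
as an induced subgraph of a finite `r`-regular graph with girth at least `g`. -/
theorem embed_into_regular_graph_preserving_girth (r : ℕ) (hr : 1 ≤ r) (g : ℕ)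
    (V : Type) [Fintype V] (G : SimpleGraph V) [DecidableRel G.Adj]
    (hdeg : ∀ v : V, G.degree v ≤ r) (hgirth : (g : ℕ∞) ≤ G.girth) :
    ∃ (V' : Type) (_ : Fintype V') (G' : SimpleGraph V'),
      (∀ v' : V', Nat.card (G'.neighborSet v') = r) ∧
      (g : ℕ∞) ≤ G'.girth ∧
      ∃ f : V → V', Function.Injective f ∧
        ∀ a b : V, G.Adj a b ↔ G'.Adj (f a) (f b) :=
  embed_into_regular_graph_preserving_girth_general r g V G hdeg hgirth
end
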